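/- Let l ≥ 0 and d ≥ 1. Let F₀ ∈ F₂[[z]] be the power series whose coefficient at z^m is 1 if and only if ν₂(m+1) ≥ l and ν₂(m+1) ≡ l (mod d), and let f ∈ F₂[[z]] be the power series whose coefficient at z^m is 1 if and only if ν₂(m+1) ≡ 0 (mod d). Then F₀ = z^{2^l − 1} · f^{2^l}. -/

import Mathlib

/-!
By the Frobenius identity in characteristic 2, `f ^ 2 ^ l` is `f` with `z` replaced by
`z ^ 2 ^ l`, so the coefficient of `z ^ m` in `z ^ (2 ^ l - 1) * f ^ 2 ^ l` is the coefficient of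
`z ^ (n / 2 ^ l - 1)` in `f` when `2 ^ l ∣ n := m + 1`, and `0` otherwise. Since
`ν₂ n = l + ν₂ (n / 2 ^ l)` in the first case, this is exactly the coefficient of `F₀`.
-/

open PowerSeries

theorem PowerSeries.coeff_pow_expChar_pow {R : Type*} [CommRing R] (p : ℕ) [ExpChar R p]
    (f : R⟦X⟧) (k n : ℕ) :
    coeff n (f ^ p ^ k) = if p ^ k ∣ n then coeff (n / p ^ k) f ^ p ^ k else 0 := by
  have hp : p ≠ 0 := expChar_ne_zero R p
  rw [← MvPowerSeries.map_iterateFrobenius_expand p hp f k]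
  change coeff n (map (iterateFrobenius R p k) (expand (p ^ k) (pow_ne_zero k hp) f)) = _
  rw [coeff_map, coeff_expand]
  split_ifs <;> simp [iterateFrobenius_def, hp]

theorem ZMod.coeff_X_pow_mul_pow_prime_pow (p : ℕ) [Fact p.Prime] (g : (ZMod p)⟦X⟧) (k n : ℕ) :
    coeff n (X ^ (p ^ k - 1) * g ^ p ^ k) =
      if p ^ k ∣ n + 1 then coeff ((n + 1) / p ^ k - 1) g else 0 := by
  have hq : 0 < p ^ k := pow_pos (Nat.Prime.pos Fact.out) k
  rw [coeff_X_pow_mul', coeff_pow_expChar_pow, ZMod.pow_card_pow]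
  by_cases hdvd : p ^ k ∣ n + 1
  · obtain ⟨j, hj⟩ := hdvd
    obtain ⟨i, rfl⟩ : ∃ i, j = i + 1 := Nat.exists_eq_succ_of_ne_zero (by rintro rfl; simp at hj)
    rw [mul_add, mul_one] at hj
    have hn : n - (p ^ k - 1) = p ^ k * i := by omega
    rw [if_pos (show p ^ k - 1 ≤ n by omega), hn, if_pos (dvd_mul_right _ _),
      if_pos ⟨i + 1, by rw [hj]; ring⟩, Nat.mul_div_cancel_left _ hq, hj, Nat.add_div_right _ hq,
      Nat.mul_div_cancel_left _ hq, Nat.add_sub_cancel]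
  · rw [if_neg hdvd, ite_eq_right_iff]
    refine fun hle => if_neg fun h => hdvd ?_
    rw [show n + 1 = n - (p ^ k - 1) + p ^ k by omega]
    exact dvd_add h dvd_rfl

theorem le_padicValNat_and_mod_eq_iff {p n : ℕ} [Fact p.Prime] (hn : n ≠ 0) (l d : ℕ) :
    l ≤ padicValNat p n ∧ padicValNat p n % d = l % d ↔
      p ^ l ∣ n ∧ padicValNat p (n / p ^ l) % d = 0 := by
  rw [← padicValNat_dvd_iff_le hn]
  refine and_congr_right fun hdvd => ?_
  rw [padicValNat.div_pow hdvd, ← Nat.dvd_iff_mod_eq_zero,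
    ← Nat.modEq_iff_dvd' ((padicValNat_dvd_iff_le hn).mp hdvd), Nat.ModEq, eq_comm]

theorem stmt14_general (l d : ℕ)
    (F₀ f : PowerSeries (ZMod 2))
    (hF₀ : F₀ = PowerSeries.mk fun m =>
      if l ≤ padicValNat 2 (m + 1) ∧ padicValNat 2 (m + 1) % d = l % d
      then 1 else 0)
    (hf : f = PowerSeries.mk fun m =>
      if padicValNat 2 (m + 1) % d = 0 then 1 else 0) :
    F₀ = PowerSeries.X ^ (2 ^ l - 1) * f ^ 2 ^ l := by
  subst hF₀ hf
  ext m
  rw [coeff_mk, ZMod.coeff_X_pow_mul_pow_prime_pow, coeff_mk]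
  simp only [le_padicValNat_and_mod_eq_iff (Nat.add_one_ne_zero m), ite_and]
  by_cases hdvd : 2 ^ l ∣ m + 1
  · rw [Nat.sub_add_cancel (Nat.div_pos (Nat.le_of_dvd m.succ_pos hdvd) (by positivity))]
  · simp only [hdvd, if_false]

/-- Let `F₀ ∈ F₂[[z]]` be supported on
`{m : ν₂(m+1) ≥ l and ν₂(m+1) ≡ l (mod d)}` and `f ∈ F₂[[z]]` supported on
`{m : ν₂(m+1) ≡ 0 (mod d)}`.  Then `F₀ = z^{2^l−1}·f^{2^l}`. -/
theorem stmt14 (l d : ℕ) (hd : 1 ≤ d)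
    (F₀ f : PowerSeries (ZMod 2))
    (hF₀ : F₀ = PowerSeries.mk fun m =>
      if l ≤ padicValNat 2 (m + 1) ∧ padicValNat 2 (m + 1) % d = l % d
      then 1 else 0)
    (hf : f = PowerSeries.mk fun m =>
      if padicValNat 2 (m + 1) % d = 0 then 1 else 0) :
    F₀ = PowerSeries.X ^ (2 ^ l - 1) * f ^ 2 ^ l :=
  stmt14_general l d F₀ f hF₀ hf
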